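/- arXiv:2601.12975 — 3 statements merged into one kernel-verified Lean document; each statement's English description precedes it below -/
import Mathlib

section
/- Let T be a finite rooted tree with positive edge weights w, and let t(u,v) denote the weighted path distance between nodes u and v. For two probability distributions μ, ν on the nodes of T, the tree Wasserstein distance ∑_{v} t(v, p(v)) |μ(T_v) − ν(T_v)| (where T_v is the subtree rooted at v and p(v) its parent) equals the 1-Wasserstein distance between μ and ν in the metric space (V, t). -/
open scoped Classical

/-- `z` is an ancestor of `u` (equivalently, `u` lies in the subtree rooted at `z`)
for the parent map `p`. -/
def Desc {V : Type*} (p : V → V) (z u : V) : Prop := ∃ k, p^[k] u = z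

/-- The weighted path metric on a rooted tree given by parent map `p` and edge weights
`w v = t(v, p v)`: the edge `(z, p z)` lies on the path from `u` to `v` iff exactly one
of `u`, `v` lies in the subtree rooted at `z`. -/
noncomputable def treeDist {V : Type*} [Fintype V] (p : V → V) (w : V → ℝ) (u v : V) : ℝ :=
  ∑ z, if (Desc p z u ↔ Desc p z v) then 0 else w z

/-- Total mass placed by `μ` on the subtree rooted at `v`. -/
noncomputable def subtreeMass {V : Type*} [Fintype V] (p : V → V) (μ : V → ℝ) (v : V) : ℝ :=
  ∑ u, if Desc p v u then μ u else 0

/-- The tree Wasserstein distance `∑_v t(v, p v) |μ(T_v) − ν(T_v)|`. -/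
noncomputable def TWD {V : Type*} [Fintype V] (p : V → V) (w : V → ℝ) (μ ν : V → ℝ) : ℝ :=
  ∑ v, w v * |subtreeMass p μ v - subtreeMass p ν v|

/-!
Writing the tree metric as a sum of cuts,
`t(u, v) = ∑_y w y · [exactly one of u, v lies in T_y]`, the cost of a coupling `P` becomes
`∑_y w y (out_y + in_y)`, where `out_y` and `in_y` are the masses `P` moves out of and into `T_y`
(`in_y` is the outflow of `Function.swap P`), while `μ(T_y) - ν(T_y) = out_y - in_y`. This gives
`TWD ≤ cost`. Conversely, a cost-minimising coupling (one exists by compactness) never moves mass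
across an edge of positive weight in both directions: exchanging the targets of an outgoing and
an incoming pair would save twice the weight of that edge. For such a coupling
`out_y + in_y = |out_y - in_y|`, so its cost is `TWD`.
-/

open Finset

section Tree

variable {V : Type*}

theorem Desc.refl (p : V → V) (z : V) : Desc p z z := ⟨0, rfl⟩

theorem Desc.trans {p : V → V} {a b c : V} (hab : Desc p a b) (hbc : Desc p b c) :
    Desc p a c := by
  obtain ⟨k, rfl⟩ := hab
  obtain ⟨m, rfl⟩ := hbc
  exact ⟨k + m, Function.iterate_add_apply p k m c⟩

theorem Desc.total {p : V → V} {y z x : V} (hy : Desc p y x) (hz : Desc p z x) :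
    Desc p y z ∨ Desc p z y := by
  obtain ⟨k, rfl⟩ := hy
  obtain ⟨m, rfl⟩ := hz
  rcases le_total k m with h | h
  · obtain ⟨j, rfl⟩ := Nat.exists_eq_add_of_le h
    exact Or.inr ⟨j, by rw [add_comm, Function.iterate_add_apply]⟩
  · obtain ⟨j, rfl⟩ := Nat.exists_eq_add_of_le h
    exact Or.inl ⟨j, by rw [add_comm, Function.iterate_add_apply]⟩

end Tree

section Transport

variable {V : Type*} [Fintype V] {μ ν : V → ℝ} {P : V → V → ℝ}

structure IsCoupling (μ ν : V → ℝ) (P : V → V → ℝ) : Prop where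
  nonneg : ∀ u v, 0 ≤ P u v
  sum_right : ∀ u, ∑ v, P u v = μ u
  sum_left : ∀ v, ∑ u, P u v = ν v

noncomputable def transportCost (d : V → V → ℝ) (P : V → V → ℝ) : ℝ :=
  ∑ u, ∑ v, P u v * d u v

theorem isCoupling_mul (hμ0 : ∀ v, 0 ≤ μ v) (hν0 : ∀ v, 0 ≤ ν v)
    (hμ1 : ∑ v, μ v = 1) (hν1 : ∑ v, ν v = 1) :
    IsCoupling μ ν (fun u v => μ u * ν v) where
  nonneg u v := mul_nonneg (hμ0 u) (hν0 v)
  sum_right u := by rw [← mul_sum, hν1, mul_one]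
  sum_left v := by rw [← sum_mul, hμ1, one_mul]

theorem IsCoupling.swap (hP : IsCoupling μ ν P) :
    IsCoupling ν μ (Function.swap P) :=
  ⟨fun u v => hP.nonneg v u, hP.sum_left, hP.sum_right⟩

theorem IsCoupling.le_left (hP : IsCoupling μ ν P) (u v : V) :
    P u v ≤ μ u :=
  hP.sum_right u ▸ single_le_sum (fun v _ => hP.nonneg u v) (mem_univ v)

theorem isCompact_setOf_isCoupling (μ ν : V → ℝ) : IsCompact {P | IsCoupling μ ν P} := by
  refine (isCompact_Icc (a := 0) (b := fun u _ => μ u)).of_isClosed_subset ?_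
    fun P hP => ⟨fun u v => hP.nonneg u v, fun u v => hP.le_left u v⟩
  have hset : {P : V → V → ℝ | IsCoupling μ ν P} =
      (⋂ u, ⋂ v, {P | 0 ≤ P u v}) ∩ (⋂ u, {P | ∑ v, P u v = μ u}) ∩
        ⋂ v, {P | ∑ u, P u v = ν v} := by
    ext P
    simp only [Set.mem_inter_iff, Set.mem_iInter]
    exact ⟨fun h => ⟨⟨h.nonneg, h.sum_right⟩, h.sum_left⟩,
      fun h => ⟨h.1.1, h.1.2, h.2⟩⟩
  rw [hset]
  refine ((isClosed_iInter fun u => isClosed_iInter fun v => ?_).inter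
    (isClosed_iInter fun u => ?_)).inter (isClosed_iInter fun v => ?_)
  · exact isClosed_le continuous_const (by fun_prop)
  · exact isClosed_eq (by fun_prop) continuous_const
  · exact isClosed_eq (by fun_prop) continuous_const

theorem exists_isCoupling_isMinOn_transportCost {P₀ : V → V → ℝ}
    (hP₀ : IsCoupling μ ν P₀) (d : V → V → ℝ) :
    ∃ P : V → V → ℝ, IsCoupling μ ν P ∧
      IsMinOn (transportCost d) {Q | IsCoupling μ ν Q} P :=
  (isCompact_setOf_isCoupling μ ν).exists_isMinOn ⟨P₀, hP₀⟩
    (by unfold transportCost; fun_prop)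

end Transport

section TreeTransport

variable {V : Type*} [Fintype V] {p : V → V} {w : V → ℝ} {μ ν : V → ℝ}
  {P : V → V → ℝ}

noncomputable def outflow (p : V → V) (P : V → V → ℝ) (y : V) : ℝ :=
  ∑ u, ∑ v, if Desc p y u ∧ ¬ Desc p y v then P u v else 0

theorem outflow_nonneg (hP : ∀ u v, 0 ≤ P u v) (y : V) :
    0 ≤ outflow p P y :=
  sum_nonneg fun u _ => sum_nonneg fun v _ => by split_ifs <;> simp [hP u v]

theorem exists_pos_of_outflow_pos {y : V} (h : 0 < outflow p P y) :
    ∃ u v, Desc p y u ∧ ¬ Desc p y v ∧ 0 < P u v := by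
  by_contra! hP
  refine h.not_ge (sum_nonpos fun u _ => sum_nonpos fun v _ => ?_)
  split_ifs with huv
  exacts [hP u v huv.1 huv.2, le_rfl]

theorem IsCoupling.subtreeMass_sub_eq (hP : IsCoupling μ ν P) (y : V) :
    subtreeMass p μ y - subtreeMass p ν y = outflow p P y - outflow p (Function.swap P) y := by
  have hμ : subtreeMass p μ y = ∑ u, ∑ v, if Desc p y u then P u v else 0 := by
    simp_rw [subtreeMass, ← hP.sum_right, ite_sum_zero]
  have hν : subtreeMass p ν y = ∑ u, ∑ v, if Desc p y v then P u v else 0 := by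
    simp_rw [subtreeMass, ← hP.sum_left, ite_sum_zero]
    exact sum_comm
  rw [hμ, hν, outflow, outflow,
    sum_comm (γ := V) (f := fun u v => ite _ (Function.swap P u v) 0)]
  simp only [← sum_sub_distrib, Function.swap]
  refine sum_congr rfl fun u _ => sum_congr rfl fun v _ => ?_
  by_cases hu : Desc p y u <;> by_cases hv : Desc p y v <;> simp [hu, hv]

theorem transportCost_treeDist :
    transportCost (treeDist p w) P =
      ∑ y, w y * (outflow p P y + outflow p (Function.swap P) y) := by
  calc transportCost (treeDist p w) P
      = ∑ u, ∑ y, ∑ v, P u v * if (Desc p y u ↔ Desc p y v) then 0 else w y := by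
        simp_rw [transportCost, treeDist, mul_sum]
        exact sum_congr rfl fun u _ => sum_comm
    _ = ∑ y, ∑ u, ∑ v, w y * ((if Desc p y u ∧ ¬ Desc p y v then P u v else 0) +
          if Desc p y v ∧ ¬ Desc p y u then P u v else 0) := by
        rw [sum_comm]
        refine sum_congr rfl fun y _ => sum_congr rfl fun u _ => sum_congr rfl fun v _ => ?_
        by_cases hu : Desc p y u <;> by_cases hv : Desc p y v <;> simp [hu, hv, mul_comm]
    _ = _ := by
        refine sum_congr rfl fun y _ => ?_
        rw [outflow, outflow, sum_comm (f := fun u v => ite _ (Function.swap P u v) 0)]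
        simp only [mul_sum, ← sum_add_distrib, mul_add, Function.swap]

theorem TWD_le_transportCost (hw : ∀ v, 0 ≤ w v) (hP : IsCoupling μ ν P) :
    TWD p w μ ν ≤ transportCost (treeDist p w) P := by
  rw [transportCost_treeDist, TWD]
  refine sum_le_sum fun y _ => mul_le_mul_of_nonneg_left ?_ (hw y)
  rw [hP.subtreeMass_sub_eq]
  have hout := outflow_nonneg (p := p) hP.nonneg y
  have hin := outflow_nonneg (p := p) hP.swap.nonneg y
  exact abs_le.mpr ⟨by linarith, by linarith⟩

/-- The paths `u → v` and `u' → v'` both cross the edge above `z` and the paths `u → v'`,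
`u' → v` do not; every other edge is crossed by the latter pair at most as often. -/
theorem treeDist_exchange (hw : ∀ v, 0 ≤ w v) {z u v u' v' : V}
    (hu : Desc p z u) (hv : ¬ Desc p z v) (hu' : ¬ Desc p z u') (hv' : Desc p z v') :
    treeDist p w u v' + treeDist p w u' v + 2 * w z ≤
      treeDist p w u v + treeDist p w u' v' := by
  have hedge : 2 * w z = ∑ y, if y = z then 2 * w y else 0 := by simp
  simp only [hedge, treeDist, ← sum_add_distrib]
  refine sum_le_sum fun y _ => ?_
  have hwy := hw y
  by_cases hzy : Desc p z y
  · have hyu' : ¬ Desc p y u' := fun h => hu' (hzy.trans h)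
    have hyv : ¬ Desc p y v := fun h => hv (hzy.trans h)
    by_cases hyz : y = z
    · subst hyz
      simp [hu, hv', hyu', hyv]
      linarith
    · by_cases hyu : Desc p y u <;> by_cases hyv' : Desc p y v' <;>
        simp [hyu, hyv', hyu', hyv, hyz, hwy]
  · have hyz : y ≠ z := fun h => hzy (h ▸ Desc.refl p z)
    by_cases hyz' : Desc p y z
    · have hyu : Desc p y u := hyz'.trans hu
      have hyv' : Desc p y v' := hyz'.trans hv'
      by_cases hyu' : Desc p y u' <;> by_cases hyv : Desc p y v <;>
        simp [hyu, hyv', hyu', hyv, hyz, hwy]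
    · have hyu : ¬ Desc p y u := fun h => (h.total hu).elim hyz' hzy
      have hyv' : ¬ Desc p y v' := fun h => (h.total hv').elim hyz' hzy
      by_cases hyu' : Desc p y u' <;> by_cases hyv : Desc p y v <;>
        simp [hyu, hyv', hyu', hyv, hyz, hwy]

theorem IsCoupling.exists_exchange (hP : IsCoupling μ ν P) (d : V → V → ℝ) {u u' v v' : V}
    (hu : u ≠ u') (hv : v ≠ v') {ε : ℝ} (hε : 0 ≤ ε) (hεuv : ε ≤ P u v)
    (hεuv' : ε ≤ P u' v') :
    ∃ Q, IsCoupling μ ν Q ∧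
      transportCost d Q = transportCost d P + ε * (d u v' + d u' v - d u v - d u' v') := by
  let δ : V → V → V → V → ℝ := fun x y a b => if a = x ∧ b = y then 1 else 0
  have hδ_right : ∀ x y a, ∑ b, δ x y a b = if a = x then 1 else 0 := by
    intro x y a; by_cases ha : a = x <;> simp [δ, ha]
  have hδ_left : ∀ x y b, ∑ a, δ x y a b = if b = y then 1 else 0 := by
    intro x y b; by_cases hb : b = y <;> simp [δ, hb]
  have hδ_cost : ∀ x y, ∑ a, ∑ b, δ x y a b * d a b = d x y := by
    intro x y; simp [δ, ite_and]
  refine ⟨fun a b => P a b + ε * (δ u v' a b + δ u' v a b - δ u v a b - δ u' v' a b),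
    ⟨fun a b => ?_, fun a => ?_, fun b => ?_⟩, ?_⟩
  · have hPab := hP.nonneg a b
    simp only [δ]
    split_ifs <;> simp_all <;> linarith
  · simp only [sum_add_distrib, ← mul_sum, sum_sub_distrib, hδ_right, hP.sum_right]
    ring
  · simp only [sum_add_distrib, ← mul_sum, sum_sub_distrib, hδ_left, hP.sum_left]
    ring
  · simp only [transportCost, add_mul, sub_mul, mul_assoc, sum_add_distrib, sum_sub_distrib,
      ← mul_sum, hδ_cost]

theorem IsCoupling.outflow_eq_zero_or_of_isMinOn (hw : ∀ v, 0 ≤ w v) (hP : IsCoupling μ ν P)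
    (hmin : IsMinOn (transportCost (treeDist p w)) {Q | IsCoupling μ ν Q} P) {y : V}
    (hy : 0 < w y) : outflow p P y = 0 ∨ outflow p (Function.swap P) y = 0 := by
  by_contra! hflow
  obtain ⟨u, v, hu, hv, huv⟩ :=
    exists_pos_of_outflow_pos ((outflow_nonneg hP.nonneg y).lt_of_ne' hflow.1)
  obtain ⟨v', u', hv', hu', hu'v'⟩ :=
    exists_pos_of_outflow_pos ((outflow_nonneg hP.swap.nonneg y).lt_of_ne' hflow.2)
  set ε := min (P u v) (P u' v')
  have hε : 0 < ε := lt_min huv hu'v'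
  obtain ⟨Q, hQ, hcost⟩ := hP.exists_exchange (treeDist p w) (u' := u') (v' := v')
    (by rintro rfl; exact hu' hu) (by rintro rfl; exact hv hv') hε.le
    (min_le_left _ _) (min_le_right _ _)
  have hsaving := mul_le_mul_of_nonneg_left (treeDist_exchange hw hu hv hu' hv') hε.le
  have hPQ := isMinOn_iff.mp hmin Q hQ
  nlinarith [mul_pos hε hy]

theorem IsCoupling.transportCost_eq_TWD_of_isMinOn (hw : ∀ v, 0 ≤ w v) (hP : IsCoupling μ ν P)
    (hmin : IsMinOn (transportCost (treeDist p w)) {Q | IsCoupling μ ν Q} P) :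
    transportCost (treeDist p w) P = TWD p w μ ν := by
  rw [transportCost_treeDist, TWD]
  refine sum_congr rfl fun y _ => ?_
  rcases (hw y).eq_or_lt with hy | hy
  · simp [← hy]
  rw [hP.subtreeMass_sub_eq]
  have hout := outflow_nonneg (p := p) hP.nonneg y
  have hin := outflow_nonneg (p := p) hP.swap.nonneg y
  rcases hP.outflow_eq_zero_or_of_isMinOn hw hmin hy with h | h <;>
    simp [h, abs_of_nonneg, hout, hin]

end TreeTransport

theorem stmt_4_general {V : Type*} [Fintype V] (p : V → V) (w : V → ℝ) (r : V)
    (hw : ∀ v, v ≠ r → 0 < w v) (hwr : w r = 0)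
    (μ ν : V → ℝ) (hμ0 : ∀ v, 0 ≤ μ v) (hν0 : ∀ v, 0 ≤ ν v)
    (hμ1 : ∑ v, μ v = 1) (hν1 : ∑ v, ν v = 1) :
    TWD p w μ ν =
      sInf {c | ∃ P : V → V → ℝ, (∀ u v, 0 ≤ P u v) ∧ (∀ u, ∑ v, P u v = μ u) ∧
        (∀ v, ∑ u, P u v = ν v) ∧ c = ∑ u, ∑ v, P u v * treeDist p w u v} := by
  have hw0 : ∀ v, 0 ≤ w v := fun v => by
    rcases eq_or_ne v r with rfl | hv
    exacts [hwr.ge, (hw v hv).le]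
  obtain ⟨P, hP, hmin⟩ :=
    exists_isCoupling_isMinOn_transportCost (isCoupling_mul hμ0 hν0 hμ1 hν1) (treeDist p w)
  refine (IsLeast.csInf_eq ⟨?_, ?_⟩).symm
  · exact ⟨P, hP.nonneg, hP.sum_right, hP.sum_left,
      (hP.transportCost_eq_TWD_of_isMinOn hw0 hmin).symm⟩
  rintro c ⟨Q, hQ0, hQr, hQc, rfl⟩
  exact TWD_le_transportCost hw0 (IsCoupling.mk hQ0 hQr hQc)

/-- On a finite rooted tree with positive edge weights, the tree Wasserstein distance
equals the 1-Wasserstein distance between `μ` and `ν` in the metric space `(V, t)`. -/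
theorem stmt_4 {V : Type*} [Fintype V] (p : V → V) (w : V → ℝ) (r : V)
    (hroot : p r = r) (hreach : ∀ v, ∃ k, p^[k] v = r)
    (hw : ∀ v, v ≠ r → 0 < w v) (hwr : w r = 0)
    (μ ν : V → ℝ) (hμ0 : ∀ v, 0 ≤ μ v) (hν0 : ∀ v, 0 ≤ ν v)
    (hμ1 : ∑ v, μ v = 1) (hν1 : ∑ v, ν v = 1) :
    TWD p w μ ν =
      sInf {c | ∃ P : V → V → ℝ, (∀ u v, 0 ≤ P u v) ∧ (∀ u, ∑ v, P u v = μ u) ∧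
        (∀ v, ∑ u, P u v = ν v) ∧ c = ∑ u, ∑ v, P u v * treeDist p w u v} :=
  stmt_4_general p w r hw hwr μ ν hμ0 hν0 hμ1 hν1
end

section
/- The tree Wasserstein distance W₁ᵗ(μ,ν) = ∑_{v ∈ V} t(v, p(v)) |μ(T_v) − ν(T_v)| defines a metric on the set of probability distributions supported on the leaves of a finite weighted rooted tree T: it is nonnegative, symmetric, satisfies the triangle inequality, and vanishes iff μ = ν. -/
open scoped Classical

/-- `v` is a leaf of the tree with parent map `p`: no other node has `v` as parent. -/
def IsLeaf {V : Type*} (p : V → V) (v : V) : Prop := ∀ u, p u = v → u = v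

/-!
Nonnegativity, symmetry and the triangle inequality hold termwise, since each summand is a
nonnegative multiple of the distance `|μ(T_v) - ν(T_v)|` between two reals. For definiteness,
a vanishing distance forces `μ(T_v) = ν(T_v)` at every non-root vertex. At a leaf the subtree
is the leaf itself, so `μ v = ν v` there; off the leaves both measures vanish; and the root,
the only vertex with weight zero, is handled by the total masses being equal.
-/

section TreeWasserstein

variable {V : Type*} {p : V → V}

theorem IsLeaf.eq_of_iterate_eq {v : V} (hv : IsLeaf p v) (k : ℕ) (u : V) (h : p^[k] u = v) :
    u = v := by
  induction k generalizing u with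
  | zero => exact h
  | succ k ih =>
    rw [Function.iterate_succ_apply] at h
    exact hv u (ih (p u) h)

theorem IsLeaf.desc_iff {v : V} (hv : IsLeaf p v) (u : V) : Desc p v u ↔ u = v :=
  ⟨fun ⟨k, hk⟩ => hv.eq_of_iterate_eq k u hk, fun hu => ⟨0, hu⟩⟩

variable [Fintype V]

theorem IsLeaf.subtreeMass_eq {v : V} (hv : IsLeaf p v) (μ : V → ℝ) :
    subtreeMass p μ v = μ v := by
  simp [subtreeMass, hv.desc_iff]

variable {w : V → ℝ}

theorem TWD_nonneg (hw : ∀ v, 0 ≤ w v) (μ ν : V → ℝ) : 0 ≤ TWD p w μ ν :=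
  Finset.sum_nonneg fun v _ => mul_nonneg (hw v) (abs_nonneg _)

theorem TWD_comm (μ ν : V → ℝ) : TWD p w μ ν = TWD p w ν μ := by
  simp only [TWD, abs_sub_comm]

theorem TWD_triangle (hw : ∀ v, 0 ≤ w v) (μ ν ρ : V → ℝ) :
    TWD p w μ ρ ≤ TWD p w μ ν + TWD p w ν ρ := by
  rw [TWD, TWD, TWD, ← Finset.sum_add_distrib]
  gcongr with v
  rw [← mul_add]
  exact mul_le_mul_of_nonneg_left (abs_sub_le _ _ _) (hw v)

theorem TWD_self (μ : V → ℝ) : TWD p w μ μ = 0 := by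
  simp [TWD]

theorem subtreeMass_eq_of_TWD_eq_zero (hw : ∀ v, 0 ≤ w v) {μ ν : V → ℝ}
    (h : TWD p w μ ν = 0) {v : V} (hv : 0 < w v) :
    subtreeMass p μ v = subtreeMass p ν v := by
  have hterm := (Finset.sum_eq_zero_iff_of_nonneg
    fun u _ => mul_nonneg (hw u) (abs_nonneg (subtreeMass p μ u - subtreeMass p ν u))).mp h v
    (Finset.mem_univ v)
  rw [mul_eq_zero, abs_eq_zero, sub_eq_zero] at hterm
  exact hterm.resolve_left hv.ne'

theorem eq_of_forall_ne_eq_of_sum_eq {f g : V → ℝ} (r : V) (hne : ∀ v, v ≠ r → f v = g v)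
    (hsum : ∑ v, f v = ∑ v, g v) : f = g := by
  have hdiff : ∑ v, (f v - g v) = f r - g r :=
    Finset.sum_eq_single r (fun v _ hv => sub_eq_zero.mpr (hne v hv)) (by simp)
  funext v
  by_cases hv : v = r
  · rw [Finset.sum_sub_distrib, hsum, sub_self] at hdiff
    rw [hv]
    linarith
  · exact hne v hv

end TreeWasserstein

theorem stmt_5_general {V : Type*} [Fintype V] (p : V → V) (w : V → ℝ) (r : V)
    (hw : ∀ v, v ≠ r → 0 < w v) (hwr : w r = 0)
    (μ ν ρ : V → ℝ)
    (hμ1 : ∑ v, μ v = 1) (hν1 : ∑ v, ν v = 1)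
    (hμleaf : ∀ v, μ v ≠ 0 → IsLeaf p v)
    (hνleaf : ∀ v, ν v ≠ 0 → IsLeaf p v) :
    0 ≤ TWD p w μ ν ∧
    TWD p w μ ν = TWD p w ν μ ∧
    TWD p w μ ρ ≤ TWD p w μ ν + TWD p w ν ρ ∧
    (TWD p w μ ν = 0 ↔ μ = ν) := by
  have hw0 : ∀ v, 0 ≤ w v := fun v => by
    rcases eq_or_ne v r with rfl | hv
    exacts [hwr.ge, (hw v hv).le]
  refine ⟨TWD_nonneg hw0 μ ν, TWD_comm μ ν, TWD_triangle hw0 μ ν ρ, ?_, ?_⟩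
  · intro h
    refine eq_of_forall_ne_eq_of_sum_eq r (fun v hv => ?_) (hμ1.trans hν1.symm)
    by_cases hleaf : IsLeaf p v
    · simpa only [hleaf.subtreeMass_eq] using subtreeMass_eq_of_TWD_eq_zero hw0 h (hw v hv)
    · rw [not_imp_comm.mp (hμleaf v) hleaf, not_imp_comm.mp (hνleaf v) hleaf]
  · rintro rfl
    exact TWD_self μ

/-- The tree Wasserstein distance is a metric on probability distributions supported
on the leaves of a finite weighted rooted tree: nonnegative, symmetric, satisfies
the triangle inequality, and vanishes iff the distributions coincide. -/
theorem stmt_5 {V : Type*} [Fintype V] (p : V → V) (w : V → ℝ) (r : V)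
    (hroot : p r = r) (hreach : ∀ v, ∃ k, p^[k] v = r)
    (hw : ∀ v, v ≠ r → 0 < w v) (hwr : w r = 0)
    (μ ν ρ : V → ℝ)
    (hμ0 : ∀ v, 0 ≤ μ v) (hν0 : ∀ v, 0 ≤ ν v) (hρ0 : ∀ v, 0 ≤ ρ v)
    (hμ1 : ∑ v, μ v = 1) (hν1 : ∑ v, ν v = 1) (hρ1 : ∑ v, ρ v = 1)
    (hμleaf : ∀ v, μ v ≠ 0 → IsLeaf p v)
    (hνleaf : ∀ v, ν v ≠ 0 → IsLeaf p v)
    (hρleaf : ∀ v, ρ v ≠ 0 → IsLeaf p v) :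
    0 ≤ TWD p w μ ν ∧
    TWD p w μ ν = TWD p w ν μ ∧
    TWD p w μ ρ ≤ TWD p w μ ν + TWD p w ν ρ ∧
    (TWD p w μ ν = 0 ↔ μ = ν) :=
  stmt_5_general p w r hw hwr μ ν ρ hμ1 hν1 hμleaf hνleaf
end

section
/- If the tree metric t dominates the ground metric, i.e., d(x_i, y_j) ≤ t(u_i, v_j) for all support points, then the Flowtree estimate satisfies W₁(μ,ν) ≤ W̃₁(μ,ν) ≤ W₁ᵗ(μ,ν), where W₁ᵗ is the optimal transport cost in the tree metric. -/
/-- `P` is a transport plan between probability vectors `μ` and `ν`. -/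
def IsPlan {n m : ℕ} (μ : Fin n → ℝ) (ν : Fin m → ℝ) (P : Fin n → Fin m → ℝ) : Prop :=
  (∀ i j, 0 ≤ P i j) ∧ (∀ i, ∑ j, P i j = μ i) ∧ (∀ j, ∑ i, P i j = ν j)

section TransportCost

variable {n m : ℕ} {μ : Fin n → ℝ} {ν : Fin m → ℝ}

theorem transportCost_mono {P c c' : Fin n → Fin m → ℝ} (hP : ∀ i j, 0 ≤ P i j)
    (hc : ∀ i j, c i j ≤ c' i j) :
    ∑ i, ∑ j, P i j * c i j ≤ ∑ i, ∑ j, P i j * c' i j :=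
  Finset.sum_le_sum fun i _ => Finset.sum_le_sum fun j _ =>
    mul_le_mul_of_nonneg_left (hc i j) (hP i j)

theorem transportCost_nonneg {P c : Fin n → Fin m → ℝ} (hP : ∀ i j, 0 ≤ P i j)
    (hc : ∀ i j, 0 ≤ c i j) : 0 ≤ ∑ i, ∑ j, P i j * c i j :=
  Finset.sum_nonneg fun i _ => Finset.sum_nonneg fun j _ => mul_nonneg (hP i j) (hc i j)

theorem sInf_transportCost_le {c P : Fin n → Fin m → ℝ} (hc : ∀ i j, 0 ≤ c i j)
    (hP : IsPlan μ ν P) :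
    sInf {s | ∃ Q, IsPlan μ ν Q ∧ s = ∑ i, ∑ j, Q i j * c i j} ≤
      ∑ i, ∑ j, P i j * c i j := by
  refine csInf_le ⟨0, ?_⟩ ⟨P, hP, rfl⟩
  rintro s ⟨Q, hQ, rfl⟩
  exact transportCost_nonneg hQ.1 hc

end TransportCost

theorem stmt_7_general (D n m : ℕ) (d : (Fin D → ℝ) → (Fin D → ℝ) → ℝ)
    (hd_nonneg : ∀ a b, 0 ≤ d a b)
    (x : Fin n → (Fin D → ℝ)) (y : Fin m → (Fin D → ℝ))
    (μ : Fin n → ℝ) (ν : Fin m → ℝ)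
    (t : Fin n → Fin m → ℝ)  -- tree distances between corresponding leaves
    (hdom : ∀ i j, d (x i) (y j) ≤ t i j)
    (Pt : Fin n → Fin m → ℝ) (hPt : IsPlan μ ν Pt) :
    sInf {c | ∃ P, IsPlan μ ν P ∧ c = ∑ i, ∑ j, P i j * d (x i) (y j)} ≤
      ∑ i, ∑ j, Pt i j * d (x i) (y j) ∧
    ∑ i, ∑ j, Pt i j * d (x i) (y j) ≤ ∑ i, ∑ j, Pt i j * t i j :=
  ⟨sInf_transportCost_le (c := fun i j => d (x i) (y j)) (fun _ _ => hd_nonneg _ _) hPt,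
    transportCost_mono hPt.1 hdom⟩

/-- If the tree metric dominates the ground metric, `d(xᵢ,yⱼ) ≤ t(uᵢ,vⱼ)`, then the
Flowtree estimate `W̃₁ = ∑ P̃ᵢⱼ d(xᵢ,yⱼ)` satisfies `W₁(μ,ν) ≤ W̃₁(μ,ν) ≤ W₁ᵗ(μ,ν)`,
where `W₁ᵗ(μ,ν) = ∑ P̃ᵢⱼ t(uᵢ,vⱼ)` is the optimal transport cost in the tree metric. -/
theorem stmt_7 (D n m : ℕ) (d : (Fin D → ℝ) → (Fin D → ℝ) → ℝ)
    (hd_nonneg : ∀ a b, 0 ≤ d a b)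
    (hd_eq : ∀ a b, d a b = 0 ↔ a = b)
    (hd_symm : ∀ a b, d a b = d b a)
    (hd_tri : ∀ a b c, d a c ≤ d a b + d b c)
    (x : Fin n → (Fin D → ℝ)) (y : Fin m → (Fin D → ℝ))
    (μ : Fin n → ℝ) (ν : Fin m → ℝ)
    (hμ0 : ∀ i, 0 ≤ μ i) (hν0 : ∀ j, 0 ≤ ν j)
    (hμ1 : ∑ i, μ i = 1) (hν1 : ∑ j, ν j = 1)
    (t : Fin n → Fin m → ℝ)  -- tree distances between corresponding leaves
    (hdom : ∀ i j, d (x i) (y j) ≤ t i j)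
    (Pt : Fin n → Fin m → ℝ) (hPt : IsPlan μ ν Pt)
    (hopt : ∀ Q, IsPlan μ ν Q →
      ∑ i, ∑ j, Pt i j * t i j ≤ ∑ i, ∑ j, Q i j * t i j) :
    sInf {c | ∃ P, IsPlan μ ν P ∧ c = ∑ i, ∑ j, P i j * d (x i) (y j)} ≤
      ∑ i, ∑ j, Pt i j * d (x i) (y j) ∧
    ∑ i, ∑ j, Pt i j * d (x i) (y j) ≤ ∑ i, ∑ j, Pt i j * t i j :=
  stmt_7_general D n m d hd_nonneg x y μ ν t hdom Pt hPt
end
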